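/- arXiv:1302.2756 — 3 statements merged into one kernel-verified Lean document; each statement's English description precedes it below -/
import Mathlib

section
/- Let m > 0 and let ρ : ℝ³ → ℝ be a Schwartz function. Define the 3×3 coupling matrix K_m by K_{m,ij} = (2π)^{-3} ∫_{ℝ³} k_i k_j |ρ̂(k)|² / (|k|² + m²) dk, where ρ̂(k) = ∫_{ℝ³} e^{i k·x} ρ(x) dx. Then for every v ∈ ℝ³: 0 ≤ v · K_m v ≤ m^{-2} ‖∇ρ‖²_{L²} |v|². Consequently, if ω > 0 and ‖∇ρ‖²_{L²(ℝ³)} < m² ω², then the matrix ω² I − K_m is positive definite, i.e. v · (ω² I − K_m) v > 0 for every v ≠ 0. -/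
/-!
The matrix `K_m` is the second-moment matrix of the nonnegative weight
`w(k) = (2π)⁻³ |ρ̂(k)|² / (|k|² + m²)`, so `v · K_m v = ∫ (k · v)² w(k) dk`. This is nonnegative,
and by Cauchy–Schwarz and `|k|² / (|k|² + m²) ≤ |k|² / m²` it is at most
`|v|² m⁻² (2π)⁻³ ∫ |k|² |ρ̂(k)|² dk`. Since `ρ̂(k) = 𝓕ρ(-k / 2π)` and
`|𝓕(∂_u ρ)(ξ)| = 2π |⟪ξ, u⟫| |𝓕ρ(ξ)|`, Plancherel identifies this integral with `(2π)³ ‖∇ρ‖²`.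
Under R1 the form `v · (ω² I − K_m) v ≥ (ω² − m⁻² ‖∇ρ‖²) |v|²` is then positive for `v ≠ 0`.
-/

open MeasureTheory RealInnerProductSpace

open scoped FourierTransform LineDeriv SchwartzMap

namespace SchwartzMap

theorem lineDerivOp_postcompCLM_ofReal {E : Type*} [NormedAddCommGroup E] [NormedSpace ℝ E]
    (ρ : 𝓢(E, ℝ)) (u x : E) :
    ∂_{u} (ρ.postcompCLM Complex.ofRealCLM) x = (fderiv ℝ ρ x u : ℂ) := by
  rw [lineDerivOp_apply_eq_fderiv]
  change fderiv ℝ (Complex.ofRealCLM ∘ ρ) x u = _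
  rw [fderiv_comp x Complex.ofRealCLM.differentiableAt ρ.differentiableAt,
    ContinuousLinearMap.fderiv]
  rfl

variable {V : Type*} [NormedAddCommGroup V] [InnerProductSpace ℝ V] [FiniteDimensional ℝ V]
  [MeasurableSpace V] [BorelSpace V]

theorem integrable_norm_sq {F : Type*} [NormedAddCommGroup F] [NormedSpace ℝ F] (f : 𝓢(V, F)) :
    Integrable (fun x => ‖f x‖ ^ 2) :=
  (memLp_two_iff_integrable_sq_norm f.continuous.aestronglyMeasurable).1 (f.memLp 2)

variable {E : Type*} [NormedAddCommGroup E] [NormedSpace ℂ E]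

theorem norm_fourier_lineDerivOp (f : 𝓢(V, E)) (u ξ : V) :
    ‖𝓕 (∂_{u} f) ξ‖ = 2 * Real.pi * |⟪ξ, u⟫| * ‖𝓕 f ξ‖ := by
  have : (inner ℝ · u).HasTemperateGrowth := ((innerSL ℝ).flip u).hasTemperateGrowth
  rw [fourier_lineDerivOp_eq, smul_apply, smulLeftCLM_apply_apply this, norm_smul, norm_smul]
  simp [Real.norm_eq_abs, abs_of_pos Real.pi_pos]
  ring

theorem sum_norm_sq_fourier_lineDerivOp {ι : Type*} [Fintype ι] (b : OrthonormalBasis ι ℝ V)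
    (f : 𝓢(V, E)) (ξ : V) :
    ∑ i, ‖𝓕 (∂_{b i} f) ξ‖ ^ 2 = (2 * Real.pi) ^ 2 * (‖ξ‖ ^ 2 * ‖𝓕 f ξ‖ ^ 2) := by
  simp_rw [norm_fourier_lineDerivOp, mul_pow, sq_abs, ← Finset.sum_mul, ← Finset.mul_sum,
    b.sum_sq_inner_left]
  ring

theorem integrable_norm_sq_mul_norm_sq_fourier (f : 𝓢(V, E)) :
    Integrable (fun ξ => ‖ξ‖ ^ 2 * ‖𝓕 f ξ‖ ^ 2) := by
  let b := stdOrthonormalBasis ℝ V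
  have hsum := (integrable_finsetSum Finset.univ fun i _ =>
    (𝓕 (∂_{b i} f)).integrable_norm_sq).const_mul ((2 * Real.pi) ^ 2)⁻¹
  refine hsum.congr (.of_forall fun ξ => ?_)
  simp only [sum_norm_sq_fourier_lineDerivOp]
  field_simp

theorem integral_sum_norm_sq_lineDerivOp {ι : Type*} [Fintype ι] {H : Type*}
    [NormedAddCommGroup H] [InnerProductSpace ℂ H] [CompleteSpace H]
    (b : OrthonormalBasis ι ℝ V) (f : 𝓢(V, H)) :
    ∫ x, ∑ i, ‖∂_{b i} f x‖ ^ 2 = (2 * Real.pi) ^ 2 * ∫ ξ, ‖ξ‖ ^ 2 * ‖𝓕 f ξ‖ ^ 2 := by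
  calc ∫ x, ∑ i, ‖∂_{b i} f x‖ ^ 2 = ∑ i, ∫ ξ, ‖𝓕 (∂_{b i} f) ξ‖ ^ 2 := by
        simp only [integral_finsetSum _ fun i _ => (∂_{b i} f).integrable_norm_sq,
          integral_norm_sq_fourier]
    _ = ∫ ξ, (2 * Real.pi) ^ 2 * (‖ξ‖ ^ 2 * ‖𝓕 f ξ‖ ^ 2) := by
        rw [← integral_finsetSum _ fun i _ => (𝓕 (∂_{b i} f)).integrable_norm_sq]
        simp only [sum_norm_sq_fourier_lineDerivOp]
    _ = _ := integral_const_mul _ _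

end SchwartzMap

section PhysicsFourier

variable {V : Type*} [NormedAddCommGroup V] [InnerProductSpace ℝ V]

theorem norm_sq_mul_norm_sq_comp_smul_eq {E : Type*} [NormedAddCommGroup E] (g : V → E) (k : V) :
    ‖k‖ ^ 2 * ‖g ((-(2 * Real.pi)⁻¹) • k)‖ ^ 2 =
      (2 * Real.pi) ^ 2 * (‖(-(2 * Real.pi)⁻¹) • k‖ ^ 2 * ‖g ((-(2 * Real.pi)⁻¹) • k)‖ ^ 2) := by
  rw [norm_smul, norm_neg, norm_inv, Real.norm_of_nonneg (by positivity)]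
  field_simp

variable [FiniteDimensional ℝ V] [MeasurableSpace V] [BorelSpace V]

/-- The Fourier transform in the physicists' convention `∫ e^{i k·x} f(x) dx`; Mathlib's `𝓕`
uses the phase `e^{-2πi⟪x, ξ⟫}`. -/
noncomputable def physicsFourier (f : V → ℂ) (k : V) : ℂ :=
  ∫ x, Complex.exp (Complex.I * (⟪k, x⟫ : ℝ)) * f x

theorem physicsFourier_eq_fourier (f : V → ℂ) (k : V) :
    physicsFourier f k = 𝓕 f ((-(2 * Real.pi)⁻¹) • k) := by
  rw [physicsFourier, Real.fourier_eq']
  congr 1 with x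
  rw [smul_eq_mul, real_inner_smul_right, real_inner_comm]
  congr 2
  push_cast
  field_simp

theorem integral_norm_sq_mul_norm_sq_comp_smul {E : Type*} [NormedAddCommGroup E] (g : V → E) :
    ∫ k, ‖k‖ ^ 2 * ‖g ((-(2 * Real.pi)⁻¹) • k)‖ ^ 2 =
      (2 * Real.pi) ^ (Module.finrank ℝ V + 2) * ∫ ξ, ‖ξ‖ ^ 2 * ‖g ξ‖ ^ 2 := by
  simp_rw [norm_sq_mul_norm_sq_comp_smul_eq g]
  rw [integral_const_mul, Measure.integral_comp_smul volume (f := fun ξ => ‖ξ‖ ^ 2 * ‖g ξ‖ ^ 2),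
    smul_eq_mul, abs_inv, abs_pow, abs_neg, abs_inv, abs_of_pos Real.two_pi_pos, inv_pow, inv_inv,
    pow_add]
  ring

theorem MeasureTheory.Integrable.norm_sq_mul_norm_sq_comp_smul {E : Type*} [NormedAddCommGroup E]
    {g : V → E} (hg : Integrable fun ξ => ‖ξ‖ ^ 2 * ‖g ξ‖ ^ 2) :
    Integrable fun k => ‖k‖ ^ 2 * ‖g ((-(2 * Real.pi)⁻¹) • k)‖ ^ 2 := by
  simp_rw [norm_sq_mul_norm_sq_comp_smul_eq g]
  exact (hg.comp_smul (by simp [Real.pi_ne_zero])).const_mul _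

theorem SchwartzMap.continuous_physicsFourier (f : 𝓢(V, ℂ)) : Continuous (physicsFourier f) := by
  rw [funext (physicsFourier_eq_fourier f)]
  exact (𝓕 f).continuous.comp (continuous_const_smul _)

theorem SchwartzMap.integrable_norm_sq_mul_norm_sq_physicsFourier (f : 𝓢(V, ℂ)) :
    Integrable fun k => ‖k‖ ^ 2 * ‖physicsFourier f k‖ ^ 2 := by
  simp_rw [physicsFourier_eq_fourier]
  exact f.integrable_norm_sq_mul_norm_sq_fourier.norm_sq_mul_norm_sq_comp_smul

theorem SchwartzMap.integral_norm_sq_mul_norm_sq_physicsFourier {ι : Type*} [Fintype ι]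
    (b : OrthonormalBasis ι ℝ V) (f : 𝓢(V, ℂ)) :
    ∫ k, ‖k‖ ^ 2 * ‖physicsFourier f k‖ ^ 2 =
      (2 * Real.pi) ^ Module.finrank ℝ V * ∫ x, ∑ i, ‖∂_{b i} f x‖ ^ 2 := by
  simp_rw [physicsFourier_eq_fourier, ← fourier_coe]
  rw [integral_norm_sq_mul_norm_sq_comp_smul, f.integral_sum_norm_sq_lineDerivOp b, pow_add]
  ring

theorem SchwartzMap.integral_sum_sq_fderiv_eq {ι : Type*} [Fintype ι] (b : OrthonormalBasis ι ℝ V)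
    (ρ : 𝓢(V, ℝ)) :
    ∫ x, ∑ i, (fderiv ℝ ρ x (b i)) ^ 2 = ((2 * Real.pi) ^ Module.finrank ℝ V)⁻¹ *
      ∫ k, ‖k‖ ^ 2 * ‖physicsFourier (ρ.postcompCLM Complex.ofRealCLM) k‖ ^ 2 := by
  rw [integral_norm_sq_mul_norm_sq_physicsFourier b]
  simp only [lineDerivOp_postcompCLM_ofReal, Complex.norm_real, Real.norm_eq_abs, sq_abs]
  field_simp

end PhysicsFourier

section MassWeight

variable {V : Type*} [NormedAddCommGroup V] {h : V → ℝ} {m : ℝ}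

theorem norm_sq_mul_div_norm_sq_add_sq_le (hh0 : 0 ≤ h) (hm : m ≠ 0) (k : V) :
    ‖k‖ ^ 2 * (h k / (‖k‖ ^ 2 + m ^ 2)) ≤ (m ^ 2)⁻¹ * (‖k‖ ^ 2 * h k) := by
  rw [mul_div_assoc', ← div_eq_inv_mul]
  exact div_le_div_of_nonneg_left (mul_nonneg (sq_nonneg _) (hh0 k)) (by positivity)
    (le_add_of_nonneg_left (sq_nonneg _))

variable [MeasurableSpace V] {μ : Measure V}

theorem integrable_norm_sq_mul_div_norm_sq_add_sq [OpensMeasurableSpace V]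
    (hh : AEStronglyMeasurable h μ) (hh0 : 0 ≤ h) (hh2 : Integrable (fun k => ‖k‖ ^ 2 * h k) μ)
    (hm : m ≠ 0) : Integrable (fun k => ‖k‖ ^ 2 * (h k / (‖k‖ ^ 2 + m ^ 2))) μ := by
  have hmeas : AEStronglyMeasurable (fun k => ‖k‖ ^ 2 * (h k / (‖k‖ ^ 2 + m ^ 2))) μ :=
    (continuous_norm.pow 2).aestronglyMeasurable.mul
      (hh.div₀ (by fun_prop : Continuous fun k : V => ‖k‖ ^ 2 + m ^ 2).aestronglyMeasurable)
  refine (hh2.const_mul (m ^ 2)⁻¹).mono' hmeas (.of_forall fun k => ?_)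
  rw [Real.norm_of_nonneg (mul_nonneg (sq_nonneg _) (div_nonneg (hh0 k) (by positivity)))]
  exact norm_sq_mul_div_norm_sq_add_sq_le hh0 hm k

theorem integral_norm_sq_mul_div_norm_sq_add_sq_le (hh0 : 0 ≤ h)
    (hh2 : Integrable (fun k => ‖k‖ ^ 2 * h k) μ) (hm : m ≠ 0) :
    ∫ k, ‖k‖ ^ 2 * (h k / (‖k‖ ^ 2 + m ^ 2)) ∂μ ≤ (m ^ 2)⁻¹ * ∫ k, ‖k‖ ^ 2 * h k ∂μ := by
  rw [← integral_const_mul]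
  exact integral_mono_of_nonneg
    (.of_forall fun k => mul_nonneg (sq_nonneg _) (div_nonneg (hh0 k) (by positivity)))
    (hh2.const_mul _) (.of_forall (norm_sq_mul_div_norm_sq_add_sq_le hh0 hm))

end MassWeight

section SecondMoment

variable {ι : Type*} [Fintype ι]

noncomputable def secondMomentMatrix (w : EuclideanSpace ℝ ι → ℝ) : Matrix ι ι ℝ :=
  Matrix.of fun i j => ∫ k, k i * k j * w k

theorem sum_sum_mul_mul_eq_inner_sq_mul (v k : EuclideanSpace ℝ ι) (a : ℝ) :
    ∑ i, ∑ j, v i * v j * (k i * k j * a) = ⟪v, k⟫ ^ 2 * a := by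
  have hinner : ⟪v, k⟫ = ∑ i, v i * k i := by simp [PiLp.inner_apply, mul_comm]
  simp_rw [hinner, sq, Finset.sum_mul_sum, Finset.sum_mul]
  exact Finset.sum_congr rfl fun i _ => Finset.sum_congr rfl fun j _ => by ring

variable {w : EuclideanSpace ℝ ι → ℝ}

theorem integrable_coord_mul_coord_mul (hw : AEStronglyMeasurable w)
    (hw2 : Integrable fun k => ‖k‖ ^ 2 * w k) (hw0 : 0 ≤ w) (i j : ι) :
    Integrable fun k => k i * k j * w k := by
  refine hw2.mono' (by fun_prop) (.of_forall fun k => ?_)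
  rw [norm_mul, norm_mul, Real.norm_of_nonneg (hw0 k), sq]
  gcongr
  · exact hw0 k
  all_goals exact PiLp.norm_apply_le k _

theorem sum_mul_secondMomentMatrix_mul (hw : AEStronglyMeasurable w)
    (hw2 : Integrable fun k => ‖k‖ ^ 2 * w k) (hw0 : 0 ≤ w) (v : EuclideanSpace ℝ ι) :
    ∑ i, ∑ j, v i * secondMomentMatrix w i j * v j = ∫ k, ⟪v, k⟫ ^ 2 * w k := by
  have hint i j := (integrable_coord_mul_coord_mul hw hw2 hw0 i j).const_mul (v i * v j)
  calc ∑ i, ∑ j, v i * secondMomentMatrix w i j * v j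
      = ∑ i, ∑ j, ∫ k, v i * v j * (k i * k j * w k) := by
        simp only [secondMomentMatrix, Matrix.of_apply, mul_right_comm _ _ (v _),
          integral_const_mul]
    _ = ∫ k, ∑ i, ∑ j, v i * v j * (k i * k j * w k) := by
        rw [integral_finsetSum _ fun i _ => integrable_finsetSum _ fun j _ => hint i j]
        simp only [integral_finsetSum _ fun j _ => hint _ j]
    _ = ∫ k, ⟪v, k⟫ ^ 2 * w k := by simp only [sum_sum_mul_mul_eq_inner_sq_mul]

theorem sum_mul_secondMomentMatrix_mul_nonneg (hw : AEStronglyMeasurable w)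
    (hw2 : Integrable fun k => ‖k‖ ^ 2 * w k) (hw0 : 0 ≤ w) (v : EuclideanSpace ℝ ι) :
    0 ≤ ∑ i, ∑ j, v i * secondMomentMatrix w i j * v j := by
  rw [sum_mul_secondMomentMatrix_mul hw hw2 hw0]
  exact integral_nonneg fun k => mul_nonneg (sq_nonneg _) (hw0 k)

theorem sum_mul_secondMomentMatrix_mul_le (hw : AEStronglyMeasurable w)
    (hw2 : Integrable fun k => ‖k‖ ^ 2 * w k) (hw0 : 0 ≤ w) (v : EuclideanSpace ℝ ι) :
    ∑ i, ∑ j, v i * secondMomentMatrix w i j * v j ≤ ‖v‖ ^ 2 * ∫ k, ‖k‖ ^ 2 * w k := by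
  rw [sum_mul_secondMomentMatrix_mul hw hw2 hw0, ← integral_const_mul]
  refine integral_mono_of_nonneg (.of_forall fun k => mul_nonneg (sq_nonneg _) (hw0 k))
    (hw2.const_mul _) (.of_forall fun k => ?_)
  have hCS : ⟪v, k⟫ ^ 2 ≤ ‖v‖ ^ 2 * ‖k‖ ^ 2 := by
    simpa only [sq, real_inner_self_eq_norm_mul_norm, mul_mul_mul_comm] using
      real_inner_mul_inner_self_le v k
  dsimp only
  rw [← mul_assoc]
  exact mul_le_mul_of_nonneg_right hCS (hw0 k)

end SecondMoment

theorem sum_mul_ite_sub_mul {ι : Type*} [Fintype ι] [DecidableEq ι] (K : Matrix ι ι ℝ) (a : ℝ)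
    (v : EuclideanSpace ℝ ι) :
    ∑ i, ∑ j, v i * ((if i = j then a else 0) - K i j) * v j =
      a * ‖v‖ ^ 2 - ∑ i, ∑ j, v i * K i j * v j := by
  rw [EuclideanSpace.real_norm_sq_eq, Finset.mul_sum]
  simp [mul_sub, sub_mul, Finset.sum_sub_distrib, sq]
  exact Finset.sum_congr rfl fun i _ => by ring

section CouplingMatrix

variable {ι : Type*} [Fintype ι] {m : ℝ}

noncomputable def spectralDensity (ρ : 𝓢(EuclideanSpace ℝ ι, ℝ)) (k : EuclideanSpace ℝ ι) : ℝ :=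
  ((2 * Real.pi) ^ Fintype.card ι)⁻¹ * ‖physicsFourier (ρ.postcompCLM Complex.ofRealCLM) k‖ ^ 2

noncomputable def couplingWeight (m : ℝ) (ρ : 𝓢(EuclideanSpace ℝ ι, ℝ)) (k : EuclideanSpace ℝ ι) :
    ℝ :=
  spectralDensity ρ k / (‖k‖ ^ 2 + m ^ 2)

theorem spectralDensity_nonneg (ρ : 𝓢(EuclideanSpace ℝ ι, ℝ)) : 0 ≤ spectralDensity ρ :=
  fun _ => by unfold spectralDensity; positivity

theorem continuous_spectralDensity (ρ : 𝓢(EuclideanSpace ℝ ι, ℝ)) :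
    Continuous (spectralDensity ρ) :=
  continuous_const.mul ((ρ.postcompCLM _).continuous_physicsFourier.norm.pow 2)

theorem integrable_norm_sq_mul_spectralDensity (ρ : 𝓢(EuclideanSpace ℝ ι, ℝ)) :
    Integrable fun k => ‖k‖ ^ 2 * spectralDensity ρ k :=
  ((ρ.postcompCLM _).integrable_norm_sq_mul_norm_sq_physicsFourier.const_mul _).congr
    (.of_forall fun _ => mul_left_comm _ _ _)

theorem integral_norm_sq_mul_spectralDensity [DecidableEq ι] (ρ : 𝓢(EuclideanSpace ℝ ι, ℝ)) :
    ∫ k, ‖k‖ ^ 2 * spectralDensity ρ k =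
      ∫ x, ∑ l, (fderiv ℝ ρ x (EuclideanSpace.single l 1)) ^ 2 := by
  have h := ρ.integral_sum_sq_fderiv_eq (EuclideanSpace.basisFun ι ℝ)
  simp only [EuclideanSpace.basisFun_apply, finrank_euclideanSpace] at h
  simp only [h, spectralDensity, mul_left_comm _ ((2 * Real.pi) ^ _)⁻¹, integral_const_mul]

theorem continuous_couplingWeight (hm : m ≠ 0) (ρ : 𝓢(EuclideanSpace ℝ ι, ℝ)) :
    Continuous (couplingWeight m ρ) :=
  (continuous_spectralDensity ρ).div (by fun_prop) fun _ => by positivity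

theorem couplingWeight_nonneg (m : ℝ) (ρ : 𝓢(EuclideanSpace ℝ ι, ℝ)) : 0 ≤ couplingWeight m ρ :=
  fun k => div_nonneg (spectralDensity_nonneg ρ k) (by positivity)

theorem integrable_norm_sq_mul_couplingWeight (hm : m ≠ 0) (ρ : 𝓢(EuclideanSpace ℝ ι, ℝ)) :
    Integrable fun k => ‖k‖ ^ 2 * couplingWeight m ρ k :=
  integrable_norm_sq_mul_div_norm_sq_add_sq (continuous_spectralDensity ρ).aestronglyMeasurable
    (spectralDensity_nonneg ρ) (integrable_norm_sq_mul_spectralDensity ρ) hm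

theorem integral_norm_sq_mul_couplingWeight_le [DecidableEq ι] (hm : m ≠ 0)
    (ρ : 𝓢(EuclideanSpace ℝ ι, ℝ)) :
    ∫ k, ‖k‖ ^ 2 * couplingWeight m ρ k ≤
      m ^ (-2 : ℤ) * ∫ x, ∑ l, (fderiv ℝ ρ x (EuclideanSpace.single l 1)) ^ 2 := by
  rw [← integral_norm_sq_mul_spectralDensity, zpow_neg, zpow_ofNat]
  exact integral_norm_sq_mul_div_norm_sq_add_sq_le (spectralDensity_nonneg ρ)
    (integrable_norm_sq_mul_spectralDensity ρ) hm

end CouplingMatrix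

/-- The coupling matrix `K_m` is nonnegative and bounded by `m⁻²‖∇ρ‖²`, and
condition R1 (`‖∇ρ‖² < m²ω²`) implies condition R1' (`ω²I − K_m` positive definite). -/
theorem coupling_matrix_bounds
    (m : ℝ) (hm : 0 < m)
    (ρ : SchwartzMap (EuclideanSpace ℝ (Fin 3)) ℝ)
    (ρhat : EuclideanSpace ℝ (Fin 3) → ℂ)
    (hρhat : ∀ k, ρhat k = ∫ x, Complex.exp (Complex.I * (⟪k, x⟫ : ℝ)) * (ρ x : ℂ))
    (K : Matrix (Fin 3) (Fin 3) ℝ)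
    (hK : ∀ i j, K i j = ((2 * Real.pi) ^ 3)⁻¹ *
      ∫ k : EuclideanSpace ℝ (Fin 3), k i * k j * ‖ρhat k‖ ^ 2 / (‖k‖ ^ 2 + m ^ 2)) :
    (∀ v : EuclideanSpace ℝ (Fin 3),
        0 ≤ ∑ i, ∑ j, v i * K i j * v j ∧
        ∑ i, ∑ j, v i * K i j * v j ≤
          m ^ (-2 : ℤ) * (∫ x, ∑ l, (fderiv ℝ ρ x (EuclideanSpace.single l 1)) ^ 2) * ‖v‖ ^ 2)
    ∧ ∀ ω : ℝ, 0 < ω →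
        (∫ x, ∑ l, (fderiv ℝ ρ x (EuclideanSpace.single l 1)) ^ 2) < m ^ 2 * ω ^ 2 →
        ∀ v : EuclideanSpace ℝ (Fin 3), v ≠ 0 →
          0 < ∑ i, ∑ j, v i * ((if i = j then ω ^ 2 else 0) - K i j) * v j := by
  set w := couplingWeight m ρ
  have hKw : K = secondMomentMatrix w := by
    obtain rfl : ρhat = physicsFourier (ρ.postcompCLM Complex.ofRealCLM) := funext hρhat
    ext i j
    rw [hK, secondMomentMatrix, Matrix.of_apply, ← integral_const_mul]
    simp only [w, couplingWeight, spectralDensity, Fintype.card_fin]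
    congr 1 with k
    ring
  have hw := (continuous_couplingWeight hm.ne' ρ).aestronglyMeasurable (μ := volume)
  have hw2 := integrable_norm_sq_mul_couplingWeight hm.ne' ρ
  have hw0 := couplingWeight_nonneg m ρ
  have hbound (v : EuclideanSpace ℝ (Fin 3)) : ∑ i, ∑ j, v i * K i j * v j ≤
      m ^ (-2 : ℤ) * (∫ x, ∑ l, (fderiv ℝ ρ x (EuclideanSpace.single l 1)) ^ 2) * ‖v‖ ^ 2 := by
    rw [hKw, mul_comm _ (‖v‖ ^ 2)]
    exact (sum_mul_secondMomentMatrix_mul_le hw hw2 hw0 v).trans (mul_le_mul_of_nonneg_left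
      (integral_norm_sq_mul_couplingWeight_le hm.ne' ρ) (sq_nonneg _))
  refine ⟨fun v => ⟨hKw ▸ sum_mul_secondMomentMatrix_mul_nonneg hw hw2 hw0 v, hbound v⟩,
    fun ω _ hR1 v hv => ?_⟩
  have hgap : m ^ (-2 : ℤ) * ∫ x, ∑ l, (fderiv ℝ ρ x (EuclideanSpace.single l 1)) ^ 2 < ω ^ 2 := by
    rw [zpow_neg, zpow_ofNat, inv_mul_lt_iff₀ (by positivity)]
    exact hR1
  rw [sum_mul_ite_sub_mul, sub_pos]
  exact (hbound v).trans_lt (mul_lt_mul_of_pos_right hgap (by positivity))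
end

section
/- Let ω > 0 and let ρ : ℝ³ → ℝ be a Schwartz function with ‖ρ‖²_{L²(ℝ³)} < ω². Then for every real μ ≥ 0 and every v ∈ ℝ³: (2π)^{-3} ∫_{ℝ³} (k·v)² |ρ̂(k)|² / (μ² + |k|²) dk ≤ ‖ρ‖²_{L²} |v|², where ρ̂(k) = ∫_{ℝ³} e^{i k·x} ρ(x) dx; in particular, for every v ≠ 0, (μ² + ω²)|v|² − (2π)^{-3} ∫_{ℝ³} (k·v)² |ρ̂(k)|² / (μ² + |k|²) dk > 0. -/
/-!
By Cauchy–Schwarz, `(k·v)² / (μ² + |k|²) ≤ |v|²` pointwise, so the integral is at most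
`|v|² ∫ |ρ̂|²`. The transform `ρ̂` is Mathlib's Fourier transform `𝓕 ρ` rescaled by `-1/(2π)`,
so Plancherel's theorem gives `∫ |ρ̂|² = (2π)³ ‖ρ‖²_{L²}`.
-/

open MeasureTheory RealInnerProductSpace
open scoped FourierTransform

theorem inner_sq_div_le {V : Type*} [NormedAddCommGroup V] [InnerProductSpace ℝ V]
    (k v : V) (μ : ℝ) : ⟪k, v⟫ ^ 2 / (μ ^ 2 + ‖k‖ ^ 2) ≤ ‖v‖ ^ 2 := by
  refine div_le_of_le_mul₀ (by positivity) (by positivity) ?_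
  calc ⟪k, v⟫ ^ 2 ≤ (‖k‖ * ‖v‖) ^ 2 :=
        sq_le_sq' (neg_le_of_abs_le (abs_real_inner_le_norm k v)) (real_inner_le_norm k v)
    _ ≤ ‖v‖ ^ 2 * (μ ^ 2 + ‖k‖ ^ 2) := by nlinarith [sq_nonneg μ, sq_nonneg ‖v‖]

section

variable {V : Type*} [NormedAddCommGroup V] [InnerProductSpace ℝ V]
  [FiniteDimensional ℝ V] [MeasurableSpace V] [BorelSpace V]

theorem integral_inner_sq_mul_div_le {g : V → ℝ} (hg0 : ∀ k, 0 ≤ g k) (hg : Integrable g)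
    (μ : ℝ) (v : V) :
    ∫ k, ⟪k, v⟫ ^ 2 * g k / (μ ^ 2 + ‖k‖ ^ 2) ≤ ‖v‖ ^ 2 * ∫ k, g k := by
  rw [← integral_const_mul]
  refine integral_mono_of_nonneg (.of_forall fun k ↦ by have := hg0 k; positivity)
    (hg.const_mul _) (.of_forall fun k ↦ ?_)
  simp only [mul_div_right_comm _ (g k)]
  exact mul_le_mul_of_nonneg_right (inner_sq_div_le k v μ) (hg0 k)

noncomputable def fourierPhys (f : V → ℂ) (k : V) : ℂ :=
  ∫ x, Complex.exp (Complex.I * (⟪k, x⟫ : ℝ)) * f x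

theorem fourierPhys_eq_fourier (f : V → ℂ) (k : V) :
    fourierPhys f k = 𝓕 f (-(2 * Real.pi)⁻¹ • k) := by
  rw [fourierPhys, Real.fourier_eq']
  congr 1 with x
  rw [smul_eq_mul, real_inner_smul_right, real_inner_comm, mul_comm Complex.I]
  congr 3
  field_simp [Real.pi_ne_zero]

theorem SchwartzMap.integrable_norm_sq_s5 {F : Type*} [NormedAddCommGroup F] [NormedSpace ℝ F]
    (f : SchwartzMap V F) : Integrable fun x ↦ ‖f x‖ ^ 2 :=
  (memLp_two_iff_integrable_sq_norm f.continuous.aestronglyMeasurable).1 (f.memLp 2)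

theorem SchwartzMap.integrable_norm_sq_fourierPhys (f : SchwartzMap V ℂ) :
    Integrable fun k ↦ ‖fourierPhys f k‖ ^ 2 := by
  simp only [fourierPhys_eq_fourier, ← SchwartzMap.fourier_coe]
  exact (𝓕 f).integrable_norm_sq_s5.comp_smul (by simp [Real.pi_ne_zero])

theorem SchwartzMap.integral_norm_sq_fourierPhys (f : SchwartzMap V ℂ) :
    ∫ k, ‖fourierPhys f k‖ ^ 2 = (2 * Real.pi) ^ Module.finrank ℝ V * ∫ x, ‖f x‖ ^ 2 := by
  simp only [fourierPhys_eq_fourier, ← SchwartzMap.fourier_coe]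
  rw [Measure.integral_comp_smul volume (fun ξ ↦ ‖𝓕 f ξ‖ ^ 2), smul_eq_mul,
    SchwartzMap.integral_norm_sq_fourier, abs_inv, abs_pow, abs_neg, abs_inv,
    abs_of_pos (by positivity), inv_pow, inv_inv]

end

theorem symbol_matrix_positive_on_real_axis_general
    (ω : ℝ)
    (ρ : SchwartzMap (EuclideanSpace ℝ (Fin 3)) ℝ)
    (hρω : ∫ x, (ρ x) ^ 2 < ω ^ 2)
    (ρhat : EuclideanSpace ℝ (Fin 3) → ℂ)
    (hρhat : ∀ k, ρhat k = ∫ x, Complex.exp (Complex.I * (⟪k, x⟫ : ℝ)) * (ρ x : ℂ)) :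
    ∀ μ : ℝ, 0 ≤ μ → ∀ v : EuclideanSpace ℝ (Fin 3),
      (((2 * Real.pi) ^ 3)⁻¹ *
          ∫ k : EuclideanSpace ℝ (Fin 3), ⟪k, v⟫ ^ 2 * ‖ρhat k‖ ^ 2 / (μ ^ 2 + ‖k‖ ^ 2)
        ≤ (∫ x, (ρ x) ^ 2) * ‖v‖ ^ 2)
      ∧ (v ≠ 0 →
        0 < (μ ^ 2 + ω ^ 2) * ‖v‖ ^ 2 - ((2 * Real.pi) ^ 3)⁻¹ *
          ∫ k : EuclideanSpace ℝ (Fin 3), ⟪k, v⟫ ^ 2 * ‖ρhat k‖ ^ 2 / (μ ^ 2 + ‖k‖ ^ 2)) := by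
  intro μ _ v
  set f := ρ.postcompCLM (𝕜 := ℝ) Complex.ofRealCLM
  have hρhat_eq : ρhat = fourierPhys f := funext hρhat
  have hplancherel : ∫ k, ‖ρhat k‖ ^ 2 = (2 * Real.pi) ^ 3 * ∫ x, ρ x ^ 2 := by
    rw [hρhat_eq, f.integral_norm_sq_fourierPhys, finrank_euclideanSpace_fin]
    simp [f]
  have hbound : ((2 * Real.pi) ^ 3)⁻¹ *
      ∫ k : EuclideanSpace ℝ (Fin 3), ⟪k, v⟫ ^ 2 * ‖ρhat k‖ ^ 2 / (μ ^ 2 + ‖k‖ ^ 2)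
        ≤ (∫ x, (ρ x) ^ 2) * ‖v‖ ^ 2 := by
    have h := integral_inner_sq_mul_div_le (fun k ↦ by positivity)
      (hρhat_eq ▸ f.integrable_norm_sq_fourierPhys) μ v
    rw [hplancherel] at h
    rw [inv_mul_le_iff₀ (by positivity)]
    linarith
  refine ⟨hbound, fun hv ↦ ?_⟩
  have hv2 : 0 < ‖v‖ ^ 2 := by positivity
  nlinarith [mul_lt_mul_of_pos_right hρω hv2, mul_nonneg (sq_nonneg μ) hv2.le]

/-- On the real axis the Laplace-transformed memory kernel is dominated by
`‖ρ‖²_{L²}|v|²`; hence under condition R1 (`‖ρ‖² < ω²`) the symbol matrix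
`A(μ) = (μ²+ω²)I − D̃(μ)` is positive definite for real `μ ≥ 0`. -/
theorem symbol_matrix_positive_on_real_axis
    (ω : ℝ) (hω : 0 < ω)
    (ρ : SchwartzMap (EuclideanSpace ℝ (Fin 3)) ℝ)
    (hρω : ∫ x, (ρ x) ^ 2 < ω ^ 2)
    (ρhat : EuclideanSpace ℝ (Fin 3) → ℂ)
    (hρhat : ∀ k, ρhat k = ∫ x, Complex.exp (Complex.I * (⟪k, x⟫ : ℝ)) * (ρ x : ℂ)) :
    ∀ μ : ℝ, 0 ≤ μ → ∀ v : EuclideanSpace ℝ (Fin 3),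
      (((2 * Real.pi) ^ 3)⁻¹ *
          ∫ k : EuclideanSpace ℝ (Fin 3), ⟪k, v⟫ ^ 2 * ‖ρhat k‖ ^ 2 / (μ ^ 2 + ‖k‖ ^ 2)
        ≤ (∫ x, (ρ x) ^ 2) * ‖v‖ ^ 2)
      ∧ (v ≠ 0 →
        0 < (μ ^ 2 + ω ^ 2) * ‖v‖ ^ 2 - ((2 * Real.pi) ^ 3)⁻¹ *
          ∫ k : EuclideanSpace ℝ (Fin 3), ⟪k, v⟫ ^ 2 * ‖ρhat k‖ ^ 2 / (μ ^ 2 + ‖k‖ ^ 2)) :=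
  symbol_matrix_positive_on_real_axis_general ω ρ hρω ρhat hρhat
end

section
/- Let δ₀ > 0 and let F be a holomorphic function on the half-plane {λ ∈ ℂ : Re λ > −δ₀} satisfying |F(λ)| ≤ C (1 + |λ|)^{-2} there, for some constant C > 0. Then for every 0 < δ < δ₀ there is a constant C′ > 0 such that for all t > 0: | (1/(2π)) ∫_ℝ e^{i y t} F(i y) dy | ≤ C′ e^{−δ t}. -/
/-!
The function `f λ = e^{λt} F λ` is holomorphic on the half-plane and, on the strip
`-δ ≤ Re λ ≤ 0`, bounded by `C (1 + (Im λ)²)⁻¹`. Hence the horizontal sides of the rectangles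
`[-δ, 0] × [-T, T]` contribute nothing as `T → ∞`, and Cauchy's theorem moves the line of
integration from `Re λ = 0` to `Re λ = -δ`. There `|e^{λt}| = e^{-δt}`, and
`∫ (1 + y²)⁻¹ dy = π` gives the bound with `C' = C / 2`.
-/

open MeasureTheory Filter Topology Set Complex
open scoped Interval

namespace Complex

variable {E : Type*} [NormedAddCommGroup E] [NormedSpace ℂ E]

theorem integral_vertical_eq_of_tendsto_horizontal {f : ℂ → E} {a b : ℝ}
    (hf : DifferentiableOn ℂ f (re ⁻¹' [[a, b]]))
    (ha : VerticalIntegrable f a) (hb : VerticalIntegrable f b)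
    (htop : Tendsto (fun T : ℝ => ∫ x in a..b, f (x + T * I)) atTop (𝓝 0))
    (hbot : Tendsto (fun T : ℝ => ∫ x in a..b, f (x + T * I)) atBot (𝓝 0)) :
    ∫ y : ℝ, f (a + y * I) = ∫ y : ℝ, f (b + y * I) := by
  set H := fun T : ℝ => ∫ x in a..b, f (x + T * I)
  set V := fun σ T : ℝ => ∫ y in -T..T, f (σ + y * I)
  have hrect : ∀ T : ℝ, I • (V b T - V a T) = H T - H (-T) := by
    intro T
    have h := integral_boundary_rect_eq_zero_of_differentiableOn f ⟨a, -T⟩ ⟨b, T⟩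
      (hf.mono inter_subset_left)
    rw [smul_sub, ← sub_eq_zero, ← h]
    simp only [H, V]
    abel
  have hV : ∀ σ, VerticalIntegrable f σ →
      Tendsto (V σ) atTop (𝓝 (∫ y : ℝ, f (σ + y * I))) := fun σ hσ =>
    intervalIntegral_tendsto_integral hσ tendsto_neg_atTop_atBot tendsto_id
  have hlim := ((hV b hb).sub (hV a ha)).const_smul I
  rw [funext hrect] at hlim
  have hzero := tendsto_nhds_unique hlim
    (by simpa using htop.sub (hbot.comp tendsto_neg_atTop_atBot))
  rw [smul_eq_zero, sub_eq_zero] at hzero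
  exact (hzero.resolve_left I_ne_zero).symm

theorem integral_vertical_eq_of_norm_le {f : ℂ → E} {a b : ℝ} {g : ℝ → ℝ}
    (hf : DifferentiableOn ℂ f (re ⁻¹' [[a, b]]))
    (hfg : ∀ z ∈ re ⁻¹' [[a, b]], ‖f z‖ ≤ g z.im)
    (hg : Integrable g) (hg0 : Tendsto g (cocompact ℝ) (𝓝 0)) :
    ∫ y : ℝ, f (a + y * I) = ∫ y : ℝ, f (b + y * I) := by
  have hvert : ∀ σ ∈ [[a, b]], VerticalIntegrable f σ := fun σ hσ =>
    hg.mono' ((hf.continuousOn.comp_continuous (by fun_prop) fun y => by simpa using hσ)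
      |>.aestronglyMeasurable)
      (.of_forall fun y => by simpa using hfg (σ + y * I) (by simpa using hσ))
  have hhoriz : ∀ T : ℝ, ‖∫ x in a..b, f (x + T * I)‖ ≤ g T * |b - a| := fun T =>
    intervalIntegral.norm_integral_le_of_norm_le_const fun x hx => by
      simpa using hfg (x + T * I) (by simpa using uIoc_subset_uIcc hx)
  have hlim : Tendsto (fun T => g T * |b - a|) (cocompact ℝ) (𝓝 0) := by
    simpa using hg0.mul_const |b - a|
  exact integral_vertical_eq_of_tendsto_horizontal hf (hvert a left_mem_uIcc)
    (hvert b right_mem_uIcc) (squeeze_zero_norm hhoriz (hlim.mono_left atTop_le_cocompact))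
    (squeeze_zero_norm hhoriz (hlim.mono_left atBot_le_cocompact))

theorem one_add_norm_zpow_neg_two_le_inv_one_add_im_sq (z : ℂ) :
    (1 + ‖z‖) ^ (-2 : ℤ) ≤ (1 + z.im ^ 2)⁻¹ := by
  rw [zpow_neg, zpow_two, ← sq]
  gcongr
  nlinarith [abs_im_le_norm z, sq_abs z.im, norm_nonneg z, abs_nonneg z.im]

end Complex

theorem tendsto_inv_one_add_sq_cocompact :
    Tendsto (fun y : ℝ => (1 + y ^ 2)⁻¹) (cocompact ℝ) (𝓝 0) := by
  have h : Tendsto (fun y : ℝ => 1 + ‖y‖ ^ 2) (cocompact ℝ) atTop :=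
    tendsto_atTop_add_const_left _ 1
      ((tendsto_pow_atTop two_ne_zero).comp tendsto_norm_cocompact_atTop)
  simpa [Function.comp_def] using tendsto_inv_atTop_zero.comp h

theorem norm_integral_le_mul_pi_of_norm_le_inv_one_add_sq {E : Type*} [NormedAddCommGroup E]
    [NormedSpace ℝ E] {f : ℝ → E} {K : ℝ}
    (hf : ∀ y, ‖f y‖ ≤ K * (1 + y ^ 2)⁻¹) :
    ‖∫ y, f y‖ ≤ K * Real.pi :=
  calc ‖∫ y, f y‖ ≤ ∫ y, K * (1 + y ^ 2)⁻¹ :=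
        norm_integral_le_of_norm_le (integrable_inv_one_add_sq.const_mul K) (.of_forall hf)
    _ = K * Real.pi := by rw [integral_const_mul, integral_univ_inv_one_add_sq]

theorem inverse_laplace_exponential_decay_general
    (δ₀ C : ℝ) (hC : 0 < C)
    (F : ℂ → ℂ)
    (hF : DifferentiableOn ℂ F {z : ℂ | -δ₀ < z.re})
    (hFb : ∀ z : ℂ, -δ₀ < z.re → ‖F z‖ ≤ C * (1 + ‖z‖) ^ (-2 : ℤ)) :
    ∀ δ : ℝ, 0 < δ → δ < δ₀ →
      ∃ C' : ℝ, 0 < C' ∧ ∀ t : ℝ, 0 < t →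
        ‖(1 / (2 * Real.pi) : ℂ) *
            ∫ y : ℝ, Complex.exp (Complex.I * (y : ℂ) * (t : ℂ)) * F (Complex.I * (y : ℂ))‖
          ≤ C' * Real.exp (-δ * t) := by
  intro δ hδ hδδ₀
  refine ⟨C / 2, by positivity, fun t ht => ?_⟩
  set f : ℂ → ℂ := fun z => cexp (z * t) * F z
  have hstrip : ∀ z ∈ re ⁻¹' [[-δ, 0]], -δ₀ < z.re ∧ z.re ≤ 0 := fun z hz => by
    rw [mem_preimage, uIcc_of_le (by linarith)] at hz
    exact ⟨by linarith [hz.1], hz.2⟩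
  have hf_le : ∀ z : ℂ, -δ₀ < z.re → ‖f z‖ ≤ Real.exp (z.re * t) * (C * (1 + z.im ^ 2)⁻¹) :=
    fun z hz => by
      rw [norm_mul, norm_exp, re_mul_ofReal]
      gcongr
      exact (hFb z hz).trans
        (mul_le_mul_of_nonneg_left (one_add_norm_zpow_neg_two_le_inv_one_add_im_sq z) hC.le)
  have hshift : ∫ y : ℝ, f ((-δ : ℝ) + y * I) = ∫ y : ℝ, f ((0 : ℝ) + y * I) := by
    refine integral_vertical_eq_of_norm_le
      ((differentiable_exp.comp (differentiable_id.mul_const _)).differentiableOn.mul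
        (hF.mono fun z hz => (hstrip z hz).1))
      (fun z hz => (hf_le z (hstrip z hz).1).trans (mul_le_of_le_one_left (by positivity) ?_))
      (integrable_inv_one_add_sq.const_mul C)
      (by simpa using tendsto_inv_one_add_sq_cocompact.const_mul C)
    exact Real.exp_le_one_iff.mpr (mul_nonpos_of_nonpos_of_nonneg (hstrip z hz).2 ht.le)
  have hline : ∫ y : ℝ, cexp (I * y * t) * F (I * y) = ∫ y : ℝ, f ((0 : ℝ) + y * I) :=
    integral_congr_ae (.of_forall fun y => by
      simp only [f, ofReal_zero, zero_add, mul_comm (y : ℂ) I])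
  have hbound : ‖∫ y : ℝ, f ((-δ : ℝ) + y * I)‖ ≤ Real.exp (-δ * t) * C * Real.pi :=
    norm_integral_le_mul_pi_of_norm_le_inv_one_add_sq fun y => by
      simpa [mul_assoc] using hf_le ((-δ : ℝ) + y * I) (by simpa using hδδ₀)
  rw [hline, ← hshift, norm_mul]
  calc _ ≤ ‖(1 / (2 * Real.pi) : ℂ)‖ * (Real.exp (-δ * t) * C * Real.pi) := by gcongr
    _ = C / 2 * Real.exp (-δ * t) := by
      simp only [one_div, mul_inv_rev, norm_mul, norm_inv, norm_real, Real.norm_eq_abs,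
        abs_of_pos Real.pi_pos, norm_ofNat]
      field_simp

/-- Contour-shifting bound: if `F` is holomorphic and `O((1+|λ|)^{-2})` on the half-plane
`Re λ > −δ₀`, then its inverse Laplace transform along the imaginary axis decays
exponentially at any rate `δ < δ₀`. -/
theorem inverse_laplace_exponential_decay
    (δ₀ C : ℝ) (hδ₀ : 0 < δ₀) (hC : 0 < C)
    (F : ℂ → ℂ)
    (hF : DifferentiableOn ℂ F {z : ℂ | -δ₀ < z.re})
    (hFb : ∀ z : ℂ, -δ₀ < z.re → ‖F z‖ ≤ C * (1 + ‖z‖) ^ (-2 : ℤ)) :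
    ∀ δ : ℝ, 0 < δ → δ < δ₀ →
      ∃ C' : ℝ, 0 < C' ∧ ∀ t : ℝ, 0 < t →
        ‖(1 / (2 * Real.pi) : ℂ) *
            ∫ y : ℝ, Complex.exp (Complex.I * (y : ℂ) * (t : ℂ)) * F (Complex.I * (y : ℂ))‖
          ≤ C' * Real.exp (-δ * t) :=
  inverse_laplace_exponential_decay_general δ₀ C hC F hF hFb
end
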